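/- arXiv:2508.18808 — 2 statements merged into one kernel-verified Lean document; each statement's English description precedes it below -/
import Mathlib

section
/- The function S is conformally covariant of scaling dimension −1: if ψ ∈ Möb(ℝ^d) is a Möbius transformation, then S(ψ(A)) = S(A)·∏_{a∈A} |det Dψ(a)|^{1/d} for every finite set A ⊆ ℝ^d ∖ ψ^{−1}(∞) with |A| ≥ 2. -/
open MeasureTheory ENNReal Filter
open scoped Classical
namespace LRP
abbrev V (d : ℕ) := Fin d → ℤ
end LRP

namespace LRP

/-! ## Euclidean space and the functional `S` -/

abbrev E (d : ℕ) := EuclideanSpace ℝ (Fin d)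

/-- The embedding of `ℤ^d` into Euclidean space. -/
noncomputable def toE {d : ℕ} (x : V d) : E d := WithLp.toLp 2 (fun i => (x i : ℝ))

/-- Fuelled recursion computing the functional `S`: for a two-point set
`S({x,y}) = ‖x-y‖₂²`, and for `|A| ≥ 3`,
`S(A) = min √(S(A₁∪A₂) S(A₂∪A₃) S(A₃∪A₁))`, the minimum being over partitions of `A`
into three nonempty sets. -/
noncomputable def SAux (d : ℕ) : ℕ → Finset (E d) → ℝ
  | 0, _ => 1
  | n + 1, A =>
    if A.card ≤ 2 then sSup {t : ℝ | ∃ x ∈ A, ∃ y ∈ A, t = dist x y ^ 2}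
    else sInf {t : ℝ | ∃ B : Finset (E d) × Finset (E d) × Finset (E d),
      (B.1.Nonempty ∧ B.2.1.Nonempty ∧ B.2.2.Nonempty ∧
        Disjoint B.1 B.2.1 ∧ Disjoint B.1 B.2.2 ∧ Disjoint B.2.1 B.2.2 ∧
        B.1 ∪ B.2.1 ∪ B.2.2 = A) ∧
      t = Real.sqrt (SAux d n (B.1 ∪ B.2.1) * SAux d n (B.2.1 ∪ B.2.2) *
        SAux d n (B.2.2 ∪ B.1))}

/-- The functional `S` on finite subsets of `ℝ^d` with at least two elements. -/
noncomputable def Sfun {d : ℕ} (A : Finset (E d)) : ℝ := SAux d A.card A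

end LRP

namespace LRP

/-! ## Möbius transformations of `ℝ^d ∪ {∞}` -/

/-- Inversion in the unit sphere. -/
noncomputable def invPt {d : ℕ} (x : E d) : E d := (‖x‖ ^ 2)⁻¹ • x

theorem invPt_ne_zero {d : ℕ} {x : E d} (hx : x ≠ 0) : invPt x ≠ 0 := by
  have h : ‖x‖ ≠ 0 := norm_ne_zero_iff.mpr hx
  exact smul_ne_zero (inv_ne_zero (pow_ne_zero 2 h)) hx

theorem invPt_invPt {d : ℕ} {x : E d} (hx : x ≠ 0) : invPt (invPt x) = x := by
  have h : ‖x‖ ≠ 0 := norm_ne_zero_iff.mpr hx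
  simp only [invPt, norm_smul, norm_inv, norm_pow, norm_norm, smul_smul]
  have h1 : (((‖x‖ ^ 2)⁻¹ * ‖x‖) ^ 2)⁻¹ * (‖x‖ ^ 2)⁻¹ = 1 := by
    field_simp
  rw [h1, one_smul]

/-- Inversion in the unit sphere, as a map of `ℝ^d ∪ {∞}` (where `∞ = none`). -/
noncomputable def inv0 (d : ℕ) : Option (E d) → Option (E d)
  | none => some 0
  | some x => if x = 0 then none else some (invPt x)

theorem inv0_invol (d : ℕ) : Function.Involutive (inv0 d) := by
  intro z
  match z with
  | none => simp [inv0]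
  | some x =>
    by_cases hx : x = 0
    · simp [inv0, hx]
    · simp only [inv0, if_neg hx]
      rw [if_neg (invPt_ne_zero hx), invPt_invPt hx]

/-- Inversion in the unit sphere as a permutation of `ℝ^d ∪ {∞}`. -/
noncomputable def inversionE (d : ℕ) : Equiv.Perm (Option (E d)) :=
  Function.Involutive.toPerm _ (inv0_invol d)

/-- The Möbius group of `ℝ^d`: the group of transformations of `ℝ^d ∪ {∞}` generated by
(the extensions of) Euclidean isometries, dilations, and the inversion in the unit
sphere. -/
noncomputable def Mob (d : ℕ) : Subgroup (Equiv.Perm (Option (E d))) :=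
  Subgroup.closure
    ({inversionE d} ∪ {ψ | ∃ f : E d ≃ E d,
      ((∀ x y : E d, dist (f x) (f y) = dist x y) ∨
        (∃ c : ℝ, 0 < c ∧ ∀ x : E d, f x = c • x)) ∧
      ψ = f.optionCongr})

/-- The finite part of a transformation of `ℝ^d ∪ {∞}` (with junk value `0` at the
preimage of `∞`). -/
noncomputable def mobFun {d : ℕ} (ψ : Equiv.Perm (Option (E d))) (x : E d) : E d :=
  (ψ (some x)).getD 0

/-- The Jacobian determinant `det Dψ(x)`. -/
noncomputable def jacDet {d : ℕ} (ψ : Equiv.Perm (Option (E d))) (x : E d) : ℝ :=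
  LinearMap.det ((fderiv ℝ (mobFun ψ) x).toLinearMap)

/-- The `ℓ^∞` norm on `ℝ^d`. -/
noncomputable def linf {d : ℕ} (y : E d) : ℝ := ⨆ i, |y i|

end LRP

namespace LRP

/-!
Every Möbius transformation is either a similarity `x ↦ c • O x + v` or `s ∘ J ∘ t` with
similarities `s, t` and `J` the inversion: this set is stable under left multiplication by the
generators because `J ∘ τ_a ∘ J = s' ∘ J ∘ τ_{J a}` for a translation `τ_a`. Both kinds of maps
are conformal with a positive factor `λ`: the derivative at `x` is `λ(x)` times a linear
isometry, so `|det Dψ(x)|^{1/d} = λ(x)`, and `‖ψ x - ψ y‖² = λ(x) λ(y) ‖x - y‖²`. By induction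
on `|A|` this gives `S(ψ(A₁ ∪ A₂)) = (∏_{A₁ ∪ A₂} λ) S(A₁ ∪ A₂)` for the blocks of a partition,
and every point of `A` lies in exactly two of the three unions under the square root, so the
factors combine to `∏_A λ`.
-/
noncomputable section

open scoped RealInnerProductSpace

structure Simil (d : ℕ) where
  c : ℝ
  hc : 0 < c
  O : E d ≃ₗᵢ[ℝ] E d
  v : E d

namespace Simil

variable {d : ℕ}

@[coe] def toFun (s : Simil d) (x : E d) : E d := s.c • s.O x + s.v

instance : CoeFun (Simil d) fun _ => E d → E d := ⟨toFun⟩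

theorem apply_eq (s : Simil d) (x : E d) : s x = s.c • s.O x + s.v := rfl

theorem dist_apply (s : Simil d) (x y : E d) : dist (s x) (s y) = s.c * dist x y := by
  rw [dist_eq_norm, dist_eq_norm, apply_eq, apply_eq, add_sub_add_right_eq_sub, ← smul_sub,
    ← map_sub, norm_smul, s.O.norm_map, Real.norm_of_nonneg s.hc.le]

def toEquiv (s : Simil d) : E d ≃ E d where
  toFun := s
  invFun y := s.O.symm (s.c⁻¹ • (y - s.v))
  left_inv x := by simp [apply_eq, smul_smul, inv_mul_cancel₀ s.hc.ne']
  right_inv y := by simp [apply_eq, smul_smul, mul_inv_cancel₀ s.hc.ne']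

def id : Simil d := ⟨1, one_pos, LinearIsometryEquiv.refl ℝ (E d), 0⟩

def comp (s t : Simil d) : Simil d :=
  ⟨s.c * t.c, mul_pos s.hc t.hc, t.O.trans s.O, s.c • s.O t.v + s.v⟩

def translation (a : E d) : Simil d := ⟨1, one_pos, LinearIsometryEquiv.refl ℝ (E d), a⟩

@[simp] theorem id_apply (x : E d) : (id : Simil d) x = x := by simp [apply_eq, id]

@[simp] theorem comp_apply (s t : Simil d) (x : E d) : s.comp t x = s (t x) := by
  simp only [apply_eq, comp, LinearIsometryEquiv.trans_apply, map_add, map_smul]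
  module

@[simp] theorem translation_apply (a x : E d) : translation a x = x + a := by
  simp [apply_eq, translation]

def toPerm (s : Simil d) : Equiv.Perm (Option (E d)) := s.toEquiv.optionCongr

@[simp] theorem toPerm_some (s : Simil d) (x : E d) : s.toPerm (some x) = some (s x) := rfl

@[simp] theorem toPerm_none (s : Simil d) : s.toPerm none = none := rfl

theorem toPerm_congr {s t : Simil d} (h : ∀ x, s x = t x) : s.toPerm = t.toPerm := by
  ext (_ | x) : 1 <;> simp [h]

@[simp] theorem toPerm_id : (id : Simil d).toPerm = 1 := by
  ext (_ | x) : 1 <;> simp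

@[simp] theorem toPerm_mul (s t : Simil d) : s.toPerm * t.toPerm = (s.comp t).toPerm := by
  ext (_ | x) : 1 <;> simp

end Simil

section Inversion

variable {d : ℕ}

@[simp] theorem inversionE_none : inversionE d none = some 0 := rfl

theorem inversionE_some (x : E d) :
    inversionE d (some x) = if x = 0 then none else some (invPt x) := rfl

@[simp] theorem inversionE_mul_self : inversionE d * inversionE d = 1 :=
  Equiv.ext (inv0_invol d)

@[simp] theorem invPt_zero : invPt (0 : E d) = 0 := by simp [invPt]

theorem invPt_smul (c : ℝ) (x : E d) : invPt (c • x) = c⁻¹ • invPt x := by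
  rcases eq_or_ne c 0 with rfl | hc
  · simp
  simp only [invPt, norm_smul, smul_smul, mul_pow, Real.norm_eq_abs, sq_abs]
  congr 1
  rcases eq_or_ne ‖x‖ 0 with hx | hx
  · simp [hx]
  · field_simp

theorem invPt_neg (x : E d) : invPt (-x) = -invPt x := by simp [invPt]

theorem invPt_map (O : E d ≃ₗᵢ[ℝ] E d) (x : E d) : invPt (O x) = O (invPt x) := by
  simp [invPt, O.norm_map]

theorem dist_invPt_sq {x y : E d} (hx : x ≠ 0) (hy : y ≠ 0) :
    dist (invPt x) (invPt y) ^ 2 = dist x y ^ 2 / (‖x‖ ^ 2 * ‖y‖ ^ 2) := by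
  have hx' : ‖x‖ ≠ 0 := norm_ne_zero_iff.mpr hx
  have hy' : ‖y‖ ≠ 0 := norm_ne_zero_iff.mpr hy
  simp only [dist_eq_norm, norm_sub_sq_real, invPt, norm_smul, real_inner_smul_left,
    real_inner_smul_right, norm_inv, norm_pow, norm_norm]
  field_simp
  ring

theorem invPt_invPt_add {x : E d} (hx : x ≠ 0) (a : E d) :
    invPt (invPt x + a) = (1 + 2 * ⟪x, a⟫ + ‖x‖ ^ 2 * ‖a‖ ^ 2)⁻¹ • (x + ‖x‖ ^ 2 • a) := by
  have hx' : ‖x‖ ^ 2 ≠ 0 := by positivity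
  have hsum : invPt x + a = (‖x‖ ^ 2)⁻¹ • (x + ‖x‖ ^ 2 • a) := by
    rw [smul_add, smul_smul, inv_mul_cancel₀ hx', one_smul, invPt]
  have hnorm : ‖x + ‖x‖ ^ 2 • a‖ ^ 2 = ‖x‖ ^ 2 * (1 + 2 * ⟪x, a⟫ + ‖x‖ ^ 2 * ‖a‖ ^ 2) := by
    rw [norm_add_sq_real, real_inner_smul_right, norm_smul, mul_pow, Real.norm_eq_abs, sq_abs]
    ring
  rw [hsum, invPt_smul, inv_inv, invPt, hnorm, smul_smul]
  congr 1
  field_simp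

theorem reflection_orthogonal_singleton_apply (a x : E d) :
    (ℝ ∙ a)ᗮ.reflection x = x - (2 * ⟪a, x⟫ / ‖a‖ ^ 2) • a := by
  rw [Submodule.reflection_orthogonal_apply, Submodule.reflection_singleton_apply]
  simp only [RCLike.ofReal_real_eq_id, id_eq]
  module

theorem norm_sq_mul_norm_invPt_add_sq {x : E d} (hx : x ≠ 0) (a : E d) :
    ‖x‖ ^ 2 * ‖invPt x + a‖ ^ 2 = 1 + 2 * ⟪x, a⟫ + ‖x‖ ^ 2 * ‖a‖ ^ 2 := by
  have hx' : ‖x‖ ≠ 0 := norm_ne_zero_iff.mpr hx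
  rw [norm_add_sq_real, invPt, norm_smul, real_inner_smul_left]
  simp only [norm_inv, norm_pow, norm_norm]
  field_simp

def Simil.reflectShift (a : E d) (ha : a ≠ 0) : Simil d :=
  ⟨(‖a‖ ^ 2)⁻¹, by have := norm_pos_iff.mpr ha; positivity, (ℝ ∙ a)ᗮ.reflection,
    (‖a‖ ^ 2)⁻¹ • a⟩

theorem Simil.reflectShift_apply {a : E d} (ha : a ≠ 0) (x : E d) :
    reflectShift a ha x = (‖a‖ ^ 2)⁻¹ • (x - (2 * ⟪a, x⟫ / ‖a‖ ^ 2) • a + a) := by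
  rw [apply_eq, reflectShift, reflection_orthogonal_singleton_apply, smul_add]

theorem invPt_invPt_add_eq_reflectShift {a x : E d} (ha : a ≠ 0) (hx : x ≠ 0)
    (hxa : invPt x + a ≠ 0) :
    invPt (invPt x + a) = Simil.reflectShift a ha (invPt (x + invPt a)) := by
  have hD : 1 + 2 * ⟪x, a⟫ + ‖x‖ ^ 2 * ‖a‖ ^ 2 ≠ 0 := by
    rw [← norm_sq_mul_norm_invPt_add_sq hx]
    have := norm_pos_iff.mpr hx
    have := norm_pos_iff.mpr hxa
    positivity
  have ha' : ‖a‖ ≠ 0 := norm_ne_zero_iff.mpr ha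
  rw [add_comm x, invPt_invPt_add hx, invPt_invPt_add ha, Simil.reflectShift_apply,
    inner_smul_right, inner_add_right, real_inner_smul_right, real_inner_self_eq_norm_sq,
    real_inner_comm x a]
  match_scalars <;> field_simp
  ring

end Inversion

section NormalForm

variable {d : ℕ}

theorem inversion_mul_translation_mul_inversion {a : E d} (ha : a ≠ 0) :
    inversionE d * (Simil.translation a).toPerm * inversionE d =
      (Simil.reflectShift a ha).toPerm * inversionE d * (Simil.translation (invPt a)).toPerm := by
  ext (_ | x) : 1
  · simp [inversionE_some, ha, invPt, Simil.reflectShift_apply]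
  rcases eq_or_ne x 0 with rfl | hx
  · simp [inversionE_some, invPt_ne_zero ha, invPt_invPt ha, Simil.reflectShift_apply]
    rw [mul_div_assoc, div_self (pow_ne_zero 2 (norm_ne_zero_iff.mpr ha))]
    module
  have hiff : x + invPt a = 0 ↔ invPt x + a = 0 := by
    rw [add_eq_zero_iff_eq_neg, add_eq_zero_iff_eq_neg]
    constructor
    · rintro rfl
      rw [invPt_neg, invPt_invPt ha]
    · intro h
      rw [← invPt_invPt hx, h, invPt_neg]
  by_cases hxa : invPt x + a = 0
  · simp [inversionE_some, hx, hxa, hiff.mpr hxa]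
  · simp [inversionE_some, hx, hxa, mt hiff.mp hxa, invPt_invPt_add_eq_reflectShift ha hx hxa]

theorem inversion_mul_toPerm_mul_inversion_of_v_eq_zero {s : Simil d} (hs : s.v = 0) :
    inversionE d * s.toPerm * inversionE d =
      (⟨s.c⁻¹, inv_pos.mpr s.hc, s.O, 0⟩ : Simil d).toPerm := by
  have hs0 : ∀ x, s x = 0 ↔ x = 0 := by
    simp [Simil.apply_eq, hs, s.hc.ne']
  ext (_ | x) : 1
  · simp [inversionE_some, hs0]
  rcases eq_or_ne x 0 with rfl | hx
  · simp [inversionE_some, Simil.apply_eq]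
  · simp [inversionE_some, hx, invPt_ne_zero hx, Simil.apply_eq, hs, s.hc.ne', invPt_smul,
      invPt_map, invPt_invPt hx]

theorem conj_mul_eq_mul_conj {G : Type*} [Group G] {j : G} (hj : j * j = 1) (a b : G) :
    j * (a * b) * j = (j * a * j) * (j * b * j) := by
  rw [show j * a * j * (j * b * j) = j * a * (j * j) * b * j by group, hj, mul_one]
  group

def IsMobNormalForm (ψ : Equiv.Perm (Option (E d))) : Prop :=
  (∃ s : Simil d, ψ = s.toPerm) ∨ ∃ s t : Simil d, ψ = s.toPerm * inversionE d * t.toPerm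

theorem isMobNormalForm_inversion_mul_toPerm_mul_inversion (s : Simil d) :
    IsMobNormalForm (inversionE d * s.toPerm * inversionE d) := by
  rcases eq_or_ne s.v 0 with hv | hv
  · exact .inl ⟨_, inversion_mul_toPerm_mul_inversion_of_v_eq_zero hv⟩
  set L : Simil d := ⟨s.c, s.hc, s.O, 0⟩
  set L' : Simil d := ⟨s.c⁻¹, inv_pos.mpr s.hc, s.O, 0⟩
  have hL : inversionE d * L.toPerm * inversionE d = L'.toPerm :=
    inversion_mul_toPerm_mul_inversion_of_v_eq_zero rfl
  have hs : s.toPerm = (Simil.translation s.v).toPerm * L.toPerm := by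
    rw [Simil.toPerm_mul]
    exact Simil.toPerm_congr fun x => by
      rw [Simil.comp_apply, Simil.translation_apply, Simil.apply_eq, Simil.apply_eq, add_zero]
  refine .inr ⟨Simil.reflectShift s.v hv, (Simil.translation (invPt s.v)).comp L', ?_⟩
  rw [hs, conj_mul_eq_mul_conj inversionE_mul_self, hL,
    inversion_mul_translation_mul_inversion hv, ← Simil.toPerm_mul, mul_assoc]

theorem IsMobNormalForm.toPerm_mul {ψ : Equiv.Perm (Option (E d))} (h : IsMobNormalForm ψ)
    (s : Simil d) : IsMobNormalForm (s.toPerm * ψ) := by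
  rcases h with ⟨t, rfl⟩ | ⟨t, u, rfl⟩
  · exact .inl ⟨s.comp t, Simil.toPerm_mul s t⟩
  · exact .inr ⟨s.comp t, u, by rw [← Simil.toPerm_mul]; group⟩

theorem IsMobNormalForm.inversion_mul {ψ : Equiv.Perm (Option (E d))} (h : IsMobNormalForm ψ) :
    IsMobNormalForm (inversionE d * ψ) := by
  rcases h with ⟨t, rfl⟩ | ⟨t, u, rfl⟩
  · exact .inr ⟨Simil.id, t, by simp⟩
  have hconj : inversionE d * (t.toPerm * inversionE d * u.toPerm) =
      inversionE d * t.toPerm * inversionE d * u.toPerm := by group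
  rw [hconj]
  rcases isMobNormalForm_inversion_mul_toPerm_mul_inversion t with ⟨v, hv⟩ | ⟨v, w, hvw⟩
  · exact .inl ⟨v.comp u, by rw [hv, Simil.toPerm_mul]⟩
  · exact .inr ⟨v, w.comp u, by rw [hvw, ← Simil.toPerm_mul]; group⟩

theorem exists_toPerm_eq_optionCongr {f : E d ≃ E d}
    (hf : (∀ x y : E d, dist (f x) (f y) = dist x y) ∨ ∃ c : ℝ, 0 < c ∧ ∀ x : E d, f x = c • x) :
    ∃ s : Simil d, s.toPerm = f.optionCongr := by
  rcases hf with hf | ⟨c, hc, hf⟩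
  · let g : E d ≃ᵢ E d := ⟨f, Isometry.of_dist_eq hf⟩
    refine ⟨⟨1, one_pos, g.toRealLinearIsometryEquiv, f 0⟩, congrArg _ (Equiv.ext fun x => ?_)⟩
    show (1 : ℝ) • g.toRealLinearIsometryEquiv x + f 0 = f x
    rw [one_smul, IsometryEquiv.toRealLinearIsometryEquiv_apply]
    exact sub_add_cancel (f x) (f 0)
  · refine ⟨⟨c, hc, LinearIsometryEquiv.refl ℝ (E d), 0⟩, congrArg _ (Equiv.ext fun x => ?_)⟩
    show c • x + 0 = f x
    rw [add_zero, hf]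

theorem isometry_or_dilation_symm {f : E d ≃ E d}
    (hf : (∀ x y : E d, dist (f x) (f y) = dist x y) ∨ ∃ c : ℝ, 0 < c ∧ ∀ x : E d, f x = c • x) :
    (∀ x y : E d, dist (f.symm x) (f.symm y) = dist x y) ∨
      ∃ c : ℝ, 0 < c ∧ ∀ x : E d, f.symm x = c • x := by
  rcases hf with hf | ⟨c, hc, hf⟩
  · exact .inl fun x y => by rw [← hf, f.apply_symm_apply, f.apply_symm_apply]
  · refine .inr ⟨c⁻¹, inv_pos.mpr hc, fun x => f.injective ?_⟩
    rw [f.apply_symm_apply, hf, smul_smul, mul_inv_cancel₀ hc.ne', one_smul]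

theorem isMobNormalForm_of_mem {ψ : Equiv.Perm (Option (E d))} (hψ : ψ ∈ Mob d) :
    IsMobNormalForm ψ := by
  induction hψ using Subgroup.closure_induction_left with
  | one => exact .inl ⟨Simil.id, Simil.toPerm_id.symm⟩
  | mul_left x hx y _ hy =>
    rcases hx with rfl | ⟨f, hf, rfl⟩
    · exact hy.inversion_mul
    · obtain ⟨s, hs⟩ := exists_toPerm_eq_optionCongr hf
      exact hs ▸ hy.toPerm_mul s
  | inv_mul_cancel x hx y _ hy =>
    rcases hx with rfl | ⟨f, hf, rfl⟩
    · rw [inv_eq_of_mul_eq_one_right inversionE_mul_self]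
      exact hy.inversion_mul
    · obtain ⟨s, hs⟩ := exists_toPerm_eq_optionCongr (isometry_or_dilation_symm hf)
      rw [Equiv.Perm.inv_def, ← Equiv.optionCongr_symm, ← hs]
      exact hy.toPerm_mul s

end NormalForm

section Conformal

variable {d : ℕ}

def HasConformalFDerivAt (f : E d → E d) (c : ℝ) (x : E d) : Prop :=
  ∃ O : E d ≃ₗᵢ[ℝ] E d, HasFDerivAt f (c • (O : E d →L[ℝ] E d)) x

theorem HasConformalFDerivAt.comp {f g : E d → E d} {c c' : ℝ} {x : E d}
    (hg : HasConformalFDerivAt g c' (f x)) (hf : HasConformalFDerivAt f c x) :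
    HasConformalFDerivAt (g ∘ f) (c' * c) x := by
  obtain ⟨O', hO'⟩ := hg
  obtain ⟨O, hO⟩ := hf
  refine ⟨O.trans O', (hO'.comp x hO).congr_fderiv ?_⟩
  ext1 y
  simp [smul_smul, mul_comm]

theorem HasConformalFDerivAt.congr_of_eventuallyEq {f g : E d → E d} {c : ℝ} {x : E d}
    (h : HasConformalFDerivAt f c x) (hg : g =ᶠ[nhds x] f) : HasConformalFDerivAt g c x :=
  let ⟨O, hO⟩ := h
  ⟨O, hO.congr_of_eventuallyEq hg⟩

theorem HasConformalFDerivAt.abs_det_fderiv {f : E d → E d} {c : ℝ} {x : E d}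
    (h : HasConformalFDerivAt f c x) (hc : 0 ≤ c) :
    |LinearMap.det (fderiv ℝ f x : E d →ₗ[ℝ] E d)| = c ^ d := by
  obtain ⟨O, hO⟩ := h
  have hO1 : ((O : E d →L[ℝ] E d) : E d →ₗ[ℝ] E d).normDet = 1 :=
    O.toLinearIsometry.normDet_eq_one
  rw [hO.fderiv, ← LinearMap.normDet_eq_abs_det, ContinuousLinearMap.toLinearMap_smul,
    LinearMap.normDet_smul, hO1, finrank_euclideanSpace_fin, Real.norm_of_nonneg hc, mul_one]

theorem Simil.hasConformalFDerivAt (s : Simil d) (x : E d) : HasConformalFDerivAt s s.c x :=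
  ⟨s.O, ((s.O : E d →L[ℝ] E d).hasFDerivAt.const_smul s.c).add_const s.v⟩

theorem Simil.continuous (s : Simil d) : Continuous s :=
  (s.O.continuous.const_smul s.c).add continuous_const

theorem hasConformalFDerivAt_invPt {x : E d} (hx : x ≠ 0) :
    HasConformalFDerivAt invPt (‖x‖ ^ 2)⁻¹ x := by
  refine ⟨(ℝ ∙ x)ᗮ.reflection, ?_⟩
  have hx' : ‖x‖ ≠ 0 := norm_ne_zero_iff.mpr hx
  have h : HasFDerivAt (fun y : E d => (‖y‖ ^ 2)⁻¹ • y) _ x :=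
    ((hasDerivAt_inv (by positivity)).comp_hasFDerivAt x
      (hasStrictFDerivAt_norm_sq x).hasFDerivAt).smul (hasFDerivAt_id x)
  refine h.congr_fderiv ?_
  ext1 w
  simp [reflection_orthogonal_singleton_apply]
  match_scalars <;> field_simp

def IsConformalFactor (ψ : Equiv.Perm (Option (E d))) (lam : E d → ℝ) : Prop :=
  ∀ x, ψ (some x) ≠ none → 0 < lam x ∧ HasConformalFDerivAt (mobFun ψ) (lam x) x ∧
    ∀ y, ψ (some y) ≠ none → dist (mobFun ψ x) (mobFun ψ y) ^ 2 = lam x * lam y * dist x y ^ 2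

theorem isConformalFactor_toPerm (s : Simil d) : IsConformalFactor s.toPerm fun _ => s.c := by
  have hψ : mobFun s.toPerm = s := rfl
  refine fun x _ => ⟨s.hc, hψ ▸ s.hasConformalFDerivAt x, fun y _ => ?_⟩
  rw [hψ, Simil.dist_apply]
  ring

theorem toPerm_mul_inversion_mul_toPerm_some (s t : Simil d) (x : E d) :
    (s.toPerm * inversionE d * t.toPerm) (some x) =
      if t x = 0 then none else some (s (invPt (t x))) := by
  simp only [Equiv.Perm.mul_apply, Simil.toPerm_some, inversionE_some]
  split_ifs <;> rfl

theorem isConformalFactor_toPerm_mul_inversion_mul_toPerm (s t : Simil d) :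
    IsConformalFactor (s.toPerm * inversionE d * t.toPerm)
      fun x => s.c * ((‖t x‖ ^ 2)⁻¹ * t.c) := by
  have hψ : ∀ x, t x ≠ 0 → mobFun (s.toPerm * inversionE d * t.toPerm) x = s (invPt (t x)) :=
    fun x hx => by rw [mobFun, toPerm_mul_inversion_mul_toPerm_some, if_neg hx]; rfl
  have hpole : ∀ x, (s.toPerm * inversionE d * t.toPerm) (some x) ≠ none → t x ≠ 0 :=
    fun x hx h0 => hx (by rw [toPerm_mul_inversion_mul_toPerm_some, if_pos h0])
  intro x hx
  have htx := hpole x hx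
  have htx' : 0 < ‖t x‖ := norm_pos_iff.mpr htx
  refine ⟨by have := s.hc; have := t.hc; positivity, ?_, fun y hy => ?_⟩
  · have hU : {y | t y ≠ 0} ∈ nhds x := (isOpen_ne_fun t.continuous continuous_const).mem_nhds htx
    refine HasConformalFDerivAt.congr_of_eventuallyEq ?_
      (Filter.eventually_of_mem hU fun y hy => hψ y hy)
    exact (s.hasConformalFDerivAt _).comp
      ((hasConformalFDerivAt_invPt htx).comp (t.hasConformalFDerivAt x))
  · have hty := hpole y hy
    have hty' : 0 < ‖t y‖ := norm_pos_iff.mpr hty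
    rw [hψ x htx, hψ y hty, Simil.dist_apply, mul_pow, dist_invPt_sq htx hty, Simil.dist_apply]
    field_simp

theorem exists_isConformalFactor {ψ : Equiv.Perm (Option (E d))} (hψ : ψ ∈ Mob d) :
    ∃ lam, IsConformalFactor ψ lam := by
  rcases isMobNormalForm_of_mem hψ with ⟨s, rfl⟩ | ⟨s, t, rfl⟩
  · exact ⟨_, isConformalFactor_toPerm s⟩
  · exact ⟨_, isConformalFactor_toPerm_mul_inversion_mul_toPerm s t⟩

theorem injOn_mobFun (ψ : Equiv.Perm (Option (E d))) :
    Set.InjOn (mobFun ψ) {x | ψ (some x) ≠ none} := by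
  intro x hx y hy hxy
  obtain ⟨u, hu⟩ := Option.ne_none_iff_exists'.mp hx
  obtain ⟨v, hv⟩ := Option.ne_none_iff_exists'.mp hy
  rw [mobFun, mobFun, hu, hv] at hxy
  exact Option.some_injective _ (ψ.injective (by rw [hu, hv]; exact congrArg some hxy))

end Conformal

section TriPartition

open Finset

variable {α β : Type*} [DecidableEq α] [DecidableEq β]

def IsTriPartition (A : Finset α) (B : Finset α × Finset α × Finset α) : Prop :=
  B.1.Nonempty ∧ B.2.1.Nonempty ∧ B.2.2.Nonempty ∧
    Disjoint B.1 B.2.1 ∧ Disjoint B.1 B.2.2 ∧ Disjoint B.2.1 B.2.2 ∧ B.1 ∪ B.2.1 ∪ B.2.2 = A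

namespace IsTriPartition

variable {A B₁ B₂ B₃ : Finset α}

theorem rotate (h : IsTriPartition A (B₁, B₂, B₃)) : IsTriPartition A (B₂, B₃, B₁) := by
  obtain ⟨h₁, h₂, h₃, h₁₂, h₁₃, h₂₃, hA⟩ := h
  refine ⟨h₂, h₃, h₁, h₂₃, h₁₂.symm, h₁₃.symm, ?_⟩
  rw [← hA]
  exact (union_comm _ _).trans (union_assoc _ _ _).symm

theorem union_subset (h : IsTriPartition A (B₁, B₂, B₃)) : B₁ ∪ B₂ ⊆ A :=
  h.2.2.2.2.2.2 ▸ subset_union_left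

theorem two_le_card_union (h : IsTriPartition A (B₁, B₂, B₃)) : 2 ≤ (B₁ ∪ B₂).card := by
  rw [card_union_of_disjoint h.2.2.2.1]
  have := h.1.card_pos
  have := h.2.1.card_pos
  omega

theorem card_union_lt (h : IsTriPartition A (B₁, B₂, B₃)) : (B₁ ∪ B₂).card < A.card := by
  obtain ⟨-, -, h₃, -, h₁₃, h₂₃, hA⟩ := h
  dsimp only at h₃ h₁₃ h₂₃ hA
  rw [← hA, card_union_of_disjoint (disjoint_union_left.mpr ⟨h₁₃, h₂₃⟩)]
  have := h₃.card_pos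
  omega

theorem image {g : α → β} (hg : Set.InjOn g A) (h : IsTriPartition A (B₁, B₂, B₃)) :
    IsTriPartition (A.image g) (B₁.image g, B₂.image g, B₃.image g) := by
  obtain ⟨h₁, h₂, h₃, h₁₂, h₁₃, h₂₃, hA⟩ := h
  dsimp only at h₁ h₂ h₃ h₁₂ h₁₃ h₂₃ hA
  have hdisj : ∀ {X Y : Finset α}, X ⊆ A → Y ⊆ A → Disjoint X Y → Disjoint (X.image g) (Y.image g) := by
    intro X Y hX hY hXY
    simp only [disjoint_left, mem_image, not_exists, not_and]
    rintro _ ⟨x, hx, rfl⟩ y hy hxy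
    exact disjoint_left.mp hXY hx (hg (hX hx) (hY hy) hxy.symm ▸ hy)
  have hsub : B₁ ⊆ A ∧ B₂ ⊆ A ∧ B₃ ⊆ A := by
    subst hA
    exact ⟨subset_union_left.trans subset_union_left, subset_union_right.trans subset_union_left,
      subset_union_right⟩
  exact ⟨h₁.image g, h₂.image g, h₃.image g, hdisj hsub.1 hsub.2.1 h₁₂, hdisj hsub.1 hsub.2.2 h₁₃,
    hdisj hsub.2.1 hsub.2.2 h₂₃, by rw [← image_union, ← image_union, hA]⟩

theorem exists_of_image {g : α → β} {C₁ C₂ C₃ : Finset β}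
    (h : IsTriPartition (A.image g) (C₁, C₂, C₃)) :
    ∃ B, IsTriPartition A B ∧ (B.1.image g, B.2.1.image g, B.2.2.image g) = (C₁, C₂, C₃) := by
  obtain ⟨h₁, h₂, h₃, h₁₂, h₁₃, h₂₃, hA⟩ := h
  dsimp only at h₁ h₂ h₃ h₁₂ h₁₃ h₂₃ hA
  have hpre : ∀ {C}, C ⊆ A.image g → ({a ∈ A | g a ∈ C} : Finset α).image g = C := by
    intro C hC
    ext b
    refine ⟨fun hb => ?_, fun hb => ?_⟩
    · obtain ⟨a, ha, rfl⟩ := mem_image.mp hb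
      exact (mem_filter.mp ha).2
    · obtain ⟨a, ha, rfl⟩ := mem_image.mp (hC hb)
      exact mem_image_of_mem g (mem_filter.mpr ⟨ha, hb⟩)
  have hsub : C₁ ⊆ A.image g ∧ C₂ ⊆ A.image g ∧ C₃ ⊆ A.image g := by
    rw [← hA]
    exact ⟨subset_union_left.trans subset_union_left, subset_union_right.trans subset_union_left,
      subset_union_right⟩
  refine ⟨({a ∈ A | g a ∈ C₁}, {a ∈ A | g a ∈ C₂}, {a ∈ A | g a ∈ C₃}),
    ⟨?_, ?_, ?_, ?_, ?_, ?_, ?_⟩, by rw [hpre hsub.1, hpre hsub.2.1, hpre hsub.2.2]⟩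
  · exact image_nonempty.mp ((hpre hsub.1).symm ▸ h₁)
  · exact image_nonempty.mp ((hpre hsub.2.1).symm ▸ h₂)
  · exact image_nonempty.mp ((hpre hsub.2.2).symm ▸ h₃)
  · exact disjoint_filter.mpr fun _ _ ha => disjoint_left.mp h₁₂ ha
  · exact disjoint_filter.mpr fun _ _ ha => disjoint_left.mp h₁₃ ha
  · exact disjoint_filter.mpr fun _ _ ha => disjoint_left.mp h₂₃ ha
  · rw [← filter_or, ← filter_or, filter_true_of_mem]
    intro a ha
    rw [← mem_union, ← mem_union, hA]
    exact mem_image_of_mem g ha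

end IsTriPartition

theorem setOf_isTriPartition_image {A : Finset α} {g : α → β} (hg : Set.InjOn g A) :
    {C | IsTriPartition (A.image g) C} =
      (fun B => (B.1.image g, B.2.1.image g, B.2.2.image g)) '' {B | IsTriPartition A B} := by
  ext C
  constructor
  · rintro hC
    obtain ⟨C₁, C₂, C₃⟩ := C
    exact hC.exists_of_image
  · rintro ⟨⟨B₁, B₂, B₃⟩, hB, rfl⟩
    exact hB.image hg

end TriPartition

section Covariance

open Finset

variable {d : ℕ}

def partitionValue (d n : ℕ) (B : Finset (E d) × Finset (E d) × Finset (E d)) : ℝ :=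
  √(SAux d n (B.1 ∪ B.2.1) * SAux d n (B.2.1 ∪ B.2.2) * SAux d n (B.2.2 ∪ B.1))

theorem SAux_succ_of_two_lt {n : ℕ} {A : Finset (E d)} (hA : 2 < A.card) :
    SAux d (n + 1) A = sInf (partitionValue d n '' {B | IsTriPartition A B}) := by
  rw [SAux, if_neg (by omega)]
  congr 1
  ext t
  exact exists_congr fun B => and_congr_right' eq_comm

theorem SAux_succ_pair (n : ℕ) (a b : E d) : SAux d (n + 1) {a, b} = dist a b ^ 2 := by
  rw [SAux, if_pos card_le_two]
  refine IsGreatest.csSup_eq ⟨⟨a, by simp, b, by simp, rfl⟩, ?_⟩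
  rintro t ⟨x, hx, y, hy, rfl⟩
  simp only [mem_insert, mem_singleton] at hx hy
  rcases hx with rfl | rfl <;> rcases hy with rfl | rfl <;> simp [dist_comm]

theorem injOn_of_dist_sq_eq {U : Set (E d)} {g : E d → E d} {lam : E d → ℝ}
    (hpos : ∀ x ∈ U, 0 < lam x)
    (hdist : ∀ x ∈ U, ∀ y ∈ U, dist (g x) (g y) ^ 2 = lam x * lam y * dist x y ^ 2) :
    Set.InjOn g U := by
  intro x hx y hy hxy
  have := hdist x hx y hy
  rw [hxy, dist_self, zero_pow two_ne_zero, eq_comm, mul_eq_zero, pow_eq_zero_iff two_ne_zero,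
    dist_eq_zero] at this
  have hx' := hpos x hx
  have hy' := hpos y hy
  exact this.resolve_left (by positivity)

variable {U : Set (E d)} {g : E d → E d} {lam : E d → ℝ}

theorem partitionValue_image (hnonneg : ∀ x ∈ U, 0 ≤ lam x) {n : ℕ}
    (ih : ∀ A : Finset (E d), ↑A ⊆ U → 2 ≤ A.card → A.card ≤ n →
      SAux d n (A.image g) = (∏ a ∈ A, lam a) * SAux d n A)
    {A : Finset (E d)} (hAU : ↑A ⊆ U) (hn : A.card ≤ n + 1) {B₁ B₂ B₃ : Finset (E d)}
    (hB : IsTriPartition A (B₁, B₂, B₃)) :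
    partitionValue d n (B₁.image g, B₂.image g, B₃.image g) =
      (∏ a ∈ A, lam a) * partitionValue d n (B₁, B₂, B₃) := by
  have hpair : ∀ {X Y Z : Finset (E d)}, IsTriPartition A (X, Y, Z) →
      SAux d n (X.image g ∪ Y.image g) = (∏ a ∈ X, lam a) * (∏ a ∈ Y, lam a) * SAux d n (X ∪ Y) :=
    fun h => by
      have := h.card_union_lt
      rw [← image_union, ih _ ((coe_subset.mpr h.union_subset).trans hAU) h.two_le_card_union
        (by omega), prod_union h.2.2.2.1]
  have hprod : ∏ a ∈ A, lam a = (∏ a ∈ B₁, lam a) * (∏ a ∈ B₂, lam a) * ∏ a ∈ B₃, lam a := by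
    rw [← hB.2.2.2.2.2.2, prod_union (disjoint_union_left.mpr ⟨hB.2.2.2.2.1, hB.2.2.2.2.2.1⟩),
      prod_union hB.2.2.2.1]
  have hsqrt : ∀ p₁ p₂ p₃ s₁₂ s₂₃ s₃₁ : ℝ, 0 ≤ p₁ * p₂ * p₃ →
      √(p₁ * p₂ * s₁₂ * (p₂ * p₃ * s₂₃) * (p₃ * p₁ * s₃₁)) = p₁ * p₂ * p₃ * √(s₁₂ * s₂₃ * s₃₁) := by
    intro p₁ p₂ p₃ s₁₂ s₂₃ s₃₁ hp
    rw [show p₁ * p₂ * s₁₂ * (p₂ * p₃ * s₂₃) * (p₃ * p₁ * s₃₁) =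
      (p₁ * p₂ * p₃) ^ 2 * (s₁₂ * s₂₃ * s₃₁) by ring, Real.sqrt_mul (sq_nonneg _), Real.sqrt_sq hp]
  rw [partitionValue, partitionValue, hpair hB, hpair hB.rotate, hpair hB.rotate.rotate, hprod]
  exact hsqrt _ _ _ _ _ _ (hprod ▸ prod_nonneg fun a ha => hnonneg a (hAU ha))

theorem SAux_image (hpos : ∀ x ∈ U, 0 < lam x)
    (hdist : ∀ x ∈ U, ∀ y ∈ U, dist (g x) (g y) ^ 2 = lam x * lam y * dist x y ^ 2) (n : ℕ) :
    ∀ A : Finset (E d), ↑A ⊆ U → 2 ≤ A.card → A.card ≤ n →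
      SAux d n (A.image g) = (∏ a ∈ A, lam a) * SAux d n A := by
  induction n with
  | zero => intro A _ h2 h0; omega
  | succ n ih =>
    intro A hAU h2 hn
    rcases h2.eq_or_lt with h2 | h3
    · obtain ⟨a, b, hab, rfl⟩ := card_eq_two.mp h2.symm
      rw [image_insert, image_singleton, SAux_succ_pair, SAux_succ_pair,
        hdist a (hAU (by simp)) b (hAU (by simp)), prod_pair hab]
    have hinj : Set.InjOn g A := (injOn_of_dist_sq_eq hpos hdist).mono hAU
    have hQ : 0 ≤ ∏ a ∈ A, lam a := prod_nonneg fun a ha => (hpos a (hAU ha)).le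
    have hval : ∀ B ∈ {B | IsTriPartition A B},
        partitionValue d n (B.1.image g, B.2.1.image g, B.2.2.image g) =
          (∏ a ∈ A, lam a) • partitionValue d n B :=
      fun ⟨_, _, _⟩ hB => partitionValue_image (fun x hx => (hpos x hx).le) ih hAU hn hB
    rw [SAux_succ_of_two_lt ((card_image_of_injOn hinj).symm ▸ h3), SAux_succ_of_two_lt h3,
      setOf_isTriPartition_image hinj, Set.image_image, Set.image_congr hval,
      ← Set.image_image (fun t => (∏ a ∈ A, lam a) • t), Set.image_smul,
      Real.sInf_smul_of_nonneg hQ, smul_eq_mul]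

end Covariance

end

/-- The function `S` is conformally covariant of scaling dimension `-1`:
if `ψ ∈ Möb(ℝ^d)` then `S(ψ(A)) = S(A) ∏_{a ∈ A} |det Dψ(a)|^{1/d}` for every finite set
`A ⊆ ℝ^d ∖ ψ⁻¹(∞)` with at least two elements. -/
theorem statement13 (d : ℕ) (ψ : Equiv.Perm (Option (E d))) (hψ : ψ ∈ Mob d)
    (A : Finset (E d)) (hA : 2 ≤ A.card) (hpole : ∀ a ∈ A, ψ (some a) ≠ none) :
    Sfun (A.image (mobFun ψ)) = Sfun A * ∏ a ∈ A, |jacDet ψ a| ^ (1 / (d : ℝ)) := by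
  obtain ⟨lam, hlam⟩ := exists_isConformalFactor hψ
  have hd : d ≠ 0 := by
    rintro rfl
    obtain ⟨a, -, b, -, hab⟩ := Finset.one_lt_card.mp hA
    exact hab (Subsingleton.elim a b)
  have hpos : ∀ x ∈ {x | ψ (some x) ≠ none}, 0 < lam x := fun x hx => (hlam x hx).1
  have hdist : ∀ x ∈ {x | ψ (some x) ≠ none}, ∀ y ∈ {x | ψ (some x) ≠ none},
      dist (mobFun ψ x) (mobFun ψ y) ^ 2 = lam x * lam y * dist x y ^ 2 :=
    fun x hx y hy => (hlam x hx).2.2 y hy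
  have hjac : ∀ a ∈ A, |jacDet ψ a| ^ (1 / (d : ℝ)) = lam a := fun a ha => by
    obtain ⟨hlam_pos, hderiv, -⟩ := hlam a (hpole a ha)
    rw [jacDet, hderiv.abs_det_fderiv hlam_pos.le, ← Real.rpow_natCast, ← Real.rpow_mul hlam_pos.le,
      mul_one_div_cancel (Nat.cast_ne_zero.mpr hd), Real.rpow_one]
  rw [Sfun, Sfun, Finset.card_image_of_injOn ((injOn_of_dist_sq_eq hpos hdist).mono hpole),
    SAux_image hpos hdist _ A hpole hA le_rfl, Finset.prod_congr rfl hjac, mul_comm]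

end LRP
end

section
/- For every finite set A ⊆ ℝ^d with |A| ≥ 2, sweep(A) ≍_{|A|} diam(A)·spread(A), i.e. there are positive constants c(n), C(n) depending only on n = |A| (not on A or d) with c(n)·diam(A)·spread(A) ≤ sweep(A) ≤ C(n)·diam(A)·spread(A). -/
open MeasureTheory ENNReal Filter
open scoped Classical
namespace LRP

/-! ## Sweep and spread -/

/-- `par` is (the parent map of) an arborescence on `A` with root `root`: a directed
tree with vertex set `A` oriented towards `root`. -/
def IsArbor {d : ℕ} (A : Finset (E d)) (par : E d → E d) (root : E d) : Prop :=
  root ∈ A ∧ par root = root ∧ (∀ x ∈ A, par x ∈ A) ∧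
    ∀ x ∈ A, ∃ n : ℕ, par^[n] x = root

/-- The set `A_x` associated to a point `x` of an arborescence: `x`, the parent of `x`,
and all the vertices having `x` as an ancestor (and `A_root = A`). -/
noncomputable def branch {d : ℕ} (A : Finset (E d)) (par : E d → E d) (root x : E d) :
    Set (E d) :=
  if x = root then (A : Set (E d))
  else insert (par x) {y | y ∈ A ∧ ∃ n : ℕ, par^[n] y = x}

/-- `sweep(A) = min ∏_{x ∈ A} diam(A_x)`, the minimum being over arborescences on `A`. -/
noncomputable def sweep {d : ℕ} (A : Finset (E d)) : ℝ :=
  sInf {t : ℝ | ∃ par : E d → E d, ∃ root : E d, IsArbor A par root ∧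
    t = ∏ x ∈ A, Metric.diam (branch A par root x)}

/-- The (Euclidean) length of an unordered pair of points. -/
noncomputable def edgeLen {d : ℕ} : Sym2 (E d) → ℝ :=
  Sym2.lift ⟨fun x y => dist x y, fun x y => dist_comm x y⟩

/-- `T` is the edge set of a tree with vertex set `A`. -/
def IsSpanTree {d : ℕ} (A : Finset (E d)) (T : Finset (Sym2 (E d))) : Prop :=
  (∀ e ∈ T, ¬e.IsDiag) ∧ (∀ e ∈ T, ∀ z ∈ e, z ∈ A) ∧ T.card + 1 = A.card ∧
    ∀ x ∈ A, ∀ y ∈ A, Relation.ReflTransGen (fun a b => s(a, b) ∈ T) x y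

/-- `spread(A) = min_T ∏_{{x,y} ∈ T} ‖x - y‖₂`, the minimum being over edge sets of
trees with vertex set `A`. -/
noncomputable def spread {d : ℕ} (A : Finset (E d)) : ℝ :=
  sInf {t : ℝ | ∃ T : Finset (Sym2 (E d)), IsSpanTree A T ∧ t = ∏ e ∈ T, edgeLen e}

/-- `min √(sweep(A₁∪A₂) sweep(A₂∪A₃) sweep(A₃∪A₁))` over partitions of `A` into three
nonempty sets. -/
noncomputable def triMin {d : ℕ} (A : Finset (E d)) : ℝ :=
  sInf {t : ℝ | ∃ B : Finset (E d) × Finset (E d) × Finset (E d),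
    (B.1.Nonempty ∧ B.2.1.Nonempty ∧ B.2.2.Nonempty ∧
      Disjoint B.1 B.2.1 ∧ Disjoint B.1 B.2.2 ∧ Disjoint B.2.1 B.2.2 ∧
      B.1 ∪ B.2.1 ∪ B.2.2 = A) ∧
    t = Real.sqrt (sweep (B.1 ∪ B.2.1) * sweep (B.2.1 ∪ B.2.2) * sweep (B.2.2 ∪ B.1))}

end LRP

/-!
Orienting a spanning tree towards a root gives an arborescence in which every non-root set
`A_x` contains the edge `{x, parent x}`, while `A_root = A`; hence
`diam(A) · spread(A) ≤ sweep(A)`. Conversely, cut a spanning tree `T` at a longest edge `{u, v}`: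
the two sides carry spanning trees, hence (inductively) arborescences, and hanging the root of
the second below the root of the first costs one extra factor `diam(A) ≤ (|A| - 1) |u - v|`.
This gives an arborescence with `∏_{x ≠ root} diam(A_x) ≤ |A|^(|A| - 1) ∏_{e ∈ T} |e|`, and for
an optimal `T` the bound `sweep(A) ≤ |A|^(|A| - 1) · diam(A) · spread(A)`.
-/

namespace LRP

section Graph

variable {α : Type*} {A : Finset α} {T : Finset (Sym2 α)} {u v x y : α}

abbrev Joined (T : Finset (Sym2 α)) : α → α → Prop :=
  Relation.ReflTransGen fun a b => s(a, b) ∈ T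

def IsConnectedOn (A : Finset α) (T : Finset (Sym2 α)) : Prop :=
  (∀ e ∈ T, ∀ z ∈ e, z ∈ A) ∧ ∀ x ∈ A, ∀ y ∈ A, Joined T x y

lemma Joined.symm (h : Joined T x y) : Joined T y x := by
  induction h with
  | refl => exact .refl
  | tail _ hbc ih => exact Relation.ReflTransGen.head (by rwa [Sym2.eq_swap]) ih

noncomputable def component (A : Finset α) (T : Finset (Sym2 α)) (u : α) : Finset α :=
  A.filter (Joined T u)

noncomputable def edgesWithin (T : Finset (Sym2 α)) (B : Finset α) : Finset (Sym2 α) :=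
  T.filter fun e => ∀ z ∈ e, z ∈ B

lemma isConnectedOn_component (hT : ∀ e ∈ T, ∀ z ∈ e, z ∈ A) :
    IsConnectedOn (component A T u) (edgesWithin T (component A T u)) := by
  have hjoin : ∀ x, Joined T u x → Joined (edgesWithin T (component A T u)) u x := by
    intro x h
    induction h with
    | refl => exact .refl
    | @tail b c hub hbc ih =>
      refine ih.tail (Finset.mem_filter.2 ⟨hbc, fun z hz => ?_⟩)
      rcases Sym2.mem_iff.1 hz with rfl | rfl
      · exact Finset.mem_filter.2 ⟨hT _ hbc _ (Sym2.mem_mk_left _ _), hub⟩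
      · exact Finset.mem_filter.2 ⟨hT _ hbc _ (Sym2.mem_mk_right _ _), hub.tail hbc⟩
  refine ⟨fun e he => (Finset.mem_filter.1 he).2, fun x hx y hy => ?_⟩
  exact (hjoin x (Finset.mem_filter.1 hx).2).symm.trans (hjoin y (Finset.mem_filter.1 hy).2)

variable [DecidableEq α]

lemma Joined.erase_of_joined (huv : Joined (T.erase s(u, v)) u v) (h : Joined T x y) :
    Joined (T.erase s(u, v)) x y := by
  induction h with
  | refl => exact .refl
  | @tail b c _ hbc ih =>
    by_cases he : s(b, c) = s(u, v)
    · rcases Sym2.eq_iff.1 he with ⟨rfl, rfl⟩ | ⟨rfl, rfl⟩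
      · exact ih.trans huv
      · exact ih.trans huv.symm
    · exact ih.tail (Finset.mem_erase.2 ⟨he, hbc⟩)

lemma Joined.erase_cases (h : Joined T u x) :
    Joined (T.erase s(u, v)) u x ∨ Joined (T.erase s(u, v)) v x := by
  induction h with
  | refl => exact Or.inl .refl
  | @tail b c _ hbc ih =>
    by_cases he : s(b, c) = s(u, v)
    · rcases Sym2.eq_iff.1 he with ⟨rfl, rfl⟩ | ⟨rfl, rfl⟩
      · exact Or.inr .refl
      · exact Or.inl .refl
    · have hbc' : s(b, c) ∈ T.erase s(u, v) := Finset.mem_erase.2 ⟨he, hbc⟩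
      exact ih.imp (·.tail hbc') (·.tail hbc')

lemma IsConnectedOn.erase (h : IsConnectedOn A T) (huv : Joined (T.erase s(u, v)) u v) :
    IsConnectedOn A (T.erase s(u, v)) :=
  ⟨fun e he => h.1 e (Finset.mem_of_mem_erase he),
    fun x hx y hy => huv.erase_of_joined (h.2 x hx y hy)⟩

lemma IsConnectedOn.exists_split (h : IsConnectedOn A T) (he : s(u, v) ∈ T)
    (hbridge : ¬Joined (T.erase s(u, v)) u v) :
    ∃ A₁ A₂ T₁ T₂, u ∈ A₁ ∧ v ∈ A₂ ∧ Disjoint A₁ A₂ ∧ A₁ ∪ A₂ = A ∧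
      Disjoint T₁ T₂ ∧ T₁ ∪ T₂ ⊆ T.erase s(u, v) ∧
      IsConnectedOn A₁ T₁ ∧ IsConnectedOn A₂ T₂ := by
  set T' := T.erase s(u, v)
  have hend : ∀ e ∈ T', ∀ z ∈ e, z ∈ A := fun e he' => h.1 e (Finset.mem_of_mem_erase he')
  have hu : u ∈ A := h.1 _ he _ (Sym2.mem_mk_left _ _)
  have hv : v ∈ A := h.1 _ he _ (Sym2.mem_mk_right _ _)
  have hdisj : Disjoint (component A T' u) (component A T' v) :=
    Finset.disjoint_left.2 fun x hxu hxv =>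
      hbridge ((Finset.mem_filter.1 hxu).2.trans (Finset.mem_filter.1 hxv).2.symm)
  refine ⟨_, _, _, _, Finset.mem_filter.2 ⟨hu, .refl⟩, Finset.mem_filter.2 ⟨hv, .refl⟩, hdisj,
    ?_, ?_, Finset.union_subset (Finset.filter_subset _ _) (Finset.filter_subset _ _),
    isConnectedOn_component hend, isConnectedOn_component hend⟩
  · refine (Finset.union_subset (Finset.filter_subset _ _) (Finset.filter_subset _ _)).antisymm
      fun x hx => ?_
    rcases (h.2 u hu x hx).erase_cases (v := v) with hux | hvx
    · exact Finset.mem_union_left _ (Finset.mem_filter.2 ⟨hx, hux⟩)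
    · exact Finset.mem_union_right _ (Finset.mem_filter.2 ⟨hx, hvx⟩)
  · refine Finset.disjoint_left.2 fun e he₁ he₂ => ?_
    obtain ⟨z, hz⟩ : ∃ z, z ∈ e := ⟨e.out.1, Sym2.out_fst_mem e⟩
    exact Finset.disjoint_left.1 hdisj ((Finset.mem_filter.1 he₁).2 z hz)
      ((Finset.mem_filter.1 he₂).2 z hz)

lemma IsConnectedOn.card_le (h : IsConnectedOn A T) : A.card ≤ T.card + 1 := by
  induction hn : T.card using Nat.strong_induction_on generalizing A T with
  | _ n ih =>
  subst hn
  rcases T.eq_empty_or_nonempty with rfl | ⟨e, he⟩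
  · refine (Finset.card_le_one.2 fun x hx y hy => ?_).trans (by simp)
    rcases (h.2 x hx y hy).cases_head with hxy | ⟨z, hz, -⟩
    · exact hxy
    · exact absurd hz (Finset.notMem_empty _)
  induction e using Sym2.ind with | _ u v =>
  have herase := Finset.card_erase_of_mem he
  have hpos := Finset.card_pos.2 ⟨_, he⟩
  by_cases hbridge : Joined (T.erase s(u, v)) u v
  · have := ih _ (Finset.card_erase_lt_of_mem he) (h.erase hbridge) rfl
    omega
  · obtain ⟨A₁, A₂, T₁, T₂, -, -, hA, rfl, hTd, hsub, h₁, h₂⟩ := h.exists_split he hbridge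
    have hcard := Finset.card_le_card hsub
    rw [Finset.card_union_of_disjoint hTd] at hcard
    have := ih _ (by omega) h₁ rfl
    have := ih _ (by omega) h₂ rfl
    rw [Finset.card_union_of_disjoint hA]
    omega

end Graph

variable {d : ℕ} {A : Finset (E d)} {T : Finset (Sym2 (E d))} {u v x y : E d}

lemma edgeLen_mk (x y : E d) : edgeLen s(x, y) = dist x y := rfl

lemma edgeLen_nonneg (e : Sym2 (E d)) : 0 ≤ edgeLen e := by
  induction e using Sym2.ind with | _ x y => exact dist_nonneg (x := x)

lemma prod_edgeLen_nonneg (T : Finset (Sym2 (E d))) : 0 ≤ ∏ e ∈ T, edgeLen e :=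
  Finset.prod_nonneg fun e _ => edgeLen_nonneg e

lemma IsSpanTree.isConnectedOn (hT : IsSpanTree A T) : IsConnectedOn A T :=
  ⟨hT.2.1, hT.2.2.2⟩

lemma IsSpanTree.card_add_one (hT : IsSpanTree A T) : T.card + 1 = A.card := hT.2.2.1

lemma IsSpanTree.exists_split (hT : IsSpanTree A T) (he : s(u, v) ∈ T) :
    ∃ A₁ A₂ T₁ T₂, u ∈ A₁ ∧ v ∈ A₂ ∧ Disjoint A₁ A₂ ∧ A₁ ∪ A₂ = A ∧
      Disjoint T₁ T₂ ∧ T₁ ∪ T₂ = T.erase s(u, v) ∧ IsSpanTree A₁ T₁ ∧ IsSpanTree A₂ T₂ := by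
  have herase := Finset.card_erase_of_mem he
  have hpos := Finset.card_pos.2 ⟨_, he⟩
  have hcard := hT.card_add_one
  have hbridge : ¬Joined (T.erase s(u, v)) u v := fun huv => by
    have := (hT.isConnectedOn.erase huv).card_le
    omega
  obtain ⟨A₁, A₂, T₁, T₂, hu, hv, hA, rfl, hTd, hsub, h₁, h₂⟩ :=
    hT.isConnectedOn.exists_split he hbridge
  -- counting edges forces `T₁ ∪ T₂ = T.erase s(u, v)` and `T₁, T₂` to be trees
  have hsub_card := Finset.card_le_card hsub
  rw [Finset.card_union_of_disjoint hTd] at hsub_card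
  rw [Finset.card_union_of_disjoint hA] at hcard
  have c₁ := h₁.card_le
  have c₂ := h₂.card_le
  have hdiag : ∀ e ∈ T₁ ∪ T₂, ¬e.IsDiag := fun e he' =>
    hT.1 e (Finset.mem_of_mem_erase (hsub he'))
  refine ⟨A₁, A₂, T₁, T₂, hu, hv, hA, rfl, hTd,
    Finset.eq_of_subset_of_card_le hsub (by rw [Finset.card_union_of_disjoint hTd]; omega),
    ⟨fun e he' => hdiag e (Finset.mem_union_left _ he'), h₁.1, by omega, h₁.2⟩,
    ⟨fun e he' => hdiag e (Finset.mem_union_right _ he'), h₂.1, by omega, h₂.2⟩⟩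

lemma IsSpanTree.diam_le_sum_edgeLen (hT : IsSpanTree A T) :
    Metric.diam (A : Set (E d)) ≤ ∑ e ∈ T, edgeLen e := by
  induction hn : A.card using Nat.strong_induction_on generalizing A T with
  | _ n ih =>
  rcases T.eq_empty_or_nonempty with rfl | ⟨e, he⟩
  · obtain ⟨a, rfl⟩ := Finset.card_eq_one.1 (by simpa using hT.card_add_one.symm)
    simp
  induction e using Sym2.ind with | _ u v =>
  obtain ⟨A₁, A₂, T₁, T₂, hu, hv, hA, rfl, hTd, hTeq, h₁, h₂⟩ := hT.exists_split he
  have hcard := Finset.card_union_of_disjoint hA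
  have := Finset.card_pos.2 ⟨u, hu⟩
  have := Finset.card_pos.2 ⟨v, hv⟩
  rw [Finset.coe_union, ← Finset.add_sum_erase T _ he, ← hTeq, Finset.sum_union hTd,
    edgeLen_mk]
  calc _ ≤ Metric.diam (A₁ : Set (E d)) + dist u v + Metric.diam (A₂ : Set (E d)) :=
        Metric.diam_union hu hv
    _ ≤ (∑ e ∈ T₁, edgeLen e) + dist u v + ∑ e ∈ T₂, edgeLen e := by
        gcongr
        exacts [ih _ (by omega) h₁ rfl, ih _ (by omega) h₂ rfl]
    _ = _ := by ring

lemma IsSpanTree.diam_le_mul_of_forall_edgeLen_le (hT : IsSpanTree A T) {L : ℝ}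
    (hL : ∀ e ∈ T, edgeLen e ≤ L) : Metric.diam (A : Set (E d)) ≤ ((A.card - 1 : ℕ) : ℝ) * L :=
  calc _ ≤ ∑ e ∈ T, edgeLen e := hT.diam_le_sum_edgeLen
    _ ≤ T.card • L := Finset.sum_le_card_nsmul _ _ _ hL
    _ = _ := by rw [nsmul_eq_mul, ← hT.card_add_one, Nat.add_sub_cancel]

variable {par : E d → E d} {root : E d}

lemma IsArbor.root_mem (h : IsArbor A par root) : root ∈ A := h.1

lemma IsArbor.par_root (h : IsArbor A par root) : par root = root := h.2.1

lemma IsArbor.mapsTo (h : IsArbor A par root) : Set.MapsTo par A A := fun x hx => h.2.2.1 x hx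

lemma IsArbor.exists_iterate_eq_root (h : IsArbor A par root) (hx : x ∈ A) :
    ∃ n, par^[n] x = root :=
  h.2.2.2 x hx

lemma IsArbor.par_ne (h : IsArbor A par root) (hx : x ∈ A) (hxr : x ≠ root) : par x ≠ x := by
  intro hfix
  obtain ⟨n, hn⟩ := h.exists_iterate_eq_root hx
  exact hxr (by rwa [Function.iterate_fixed hfix] at hn)

lemma IsArbor.injOn_edge (h : IsArbor A par root) :
    Set.InjOn (fun x => s(x, par x)) (A.erase root : Set (E d)) := by
  intro x hx y hy hxy
  simp only [Finset.coe_erase, Set.mem_sdiff, Finset.mem_coe, Set.mem_singleton_iff] at hx hy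
  rcases Sym2.eq_iff.1 hxy with ⟨hxy, -⟩ | ⟨hxy, hyx⟩
  · exact hxy
  -- `x` and `y` would form a 2-cycle of `par` that never reaches the root
  have hcycle : ∀ n, par^[n] x = x ∨ par^[n] x = y := by
    intro n
    induction n with
    | zero => exact Or.inl rfl
    | succ n ih =>
      rw [Function.iterate_succ_apply']
      rcases ih with h' | h' <;> rw [h']
      exacts [Or.inr hyx, Or.inl hxy.symm]
  obtain ⟨n, hn⟩ := h.exists_iterate_eq_root hx.1
  rcases hcycle n with h' | h'
  exacts [absurd (h'.symm.trans hn) hx.2, absurd (h'.symm.trans hn) hy.2]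

noncomputable def arborEdges (A : Finset (E d)) (par : E d → E d) (root : E d) :
    Finset (Sym2 (E d)) :=
  (A.erase root).image fun x => s(x, par x)

lemma IsArbor.joined_root (h : IsArbor A par root) (hx : x ∈ A) :
    Joined (arborEdges A par root) x root := by
  obtain ⟨n, hn⟩ := h.exists_iterate_eq_root hx
  induction n generalizing x with
  | zero => exact hn ▸ .refl
  | succ n ih =>
    by_cases hxr : x = root
    · exact hxr ▸ .refl
    · exact .head (Finset.mem_image.2 ⟨x, Finset.mem_erase.2 ⟨hxr, hx⟩, rfl⟩)
        (ih (h.mapsTo hx) hn)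

lemma IsArbor.isSpanTree_arborEdges (h : IsArbor A par root) :
    IsSpanTree A (arborEdges A par root) := by
  refine ⟨?_, ?_, ?_, fun x hx y hy => (h.joined_root hx).trans (h.joined_root hy).symm⟩
  · rintro _ he
    obtain ⟨x, hx, rfl⟩ := Finset.mem_image.1 he
    exact fun hdiag => h.par_ne (Finset.mem_of_mem_erase hx) (Finset.ne_of_mem_erase hx)
      (Sym2.mk_isDiag_iff.1 hdiag).symm
  · rintro _ he z hz
    obtain ⟨x, hx, rfl⟩ := Finset.mem_image.1 he
    rcases Sym2.mem_iff.1 hz with rfl | rfl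
    exacts [Finset.mem_of_mem_erase hx, h.mapsTo (Finset.mem_of_mem_erase hx)]
  · rw [arborEdges, Finset.card_image_of_injOn h.injOn_edge, Finset.card_erase_of_mem h.root_mem]
    have := Finset.card_pos.2 ⟨root, h.root_mem⟩
    omega

lemma IsArbor.prod_arborEdges (h : IsArbor A par root) :
    ∏ e ∈ arborEdges A par root, edgeLen e = ∏ x ∈ A.erase root, dist x (par x) :=
  Finset.prod_image fun _ hx _ hy hxy => h.injOn_edge hx hy hxy

lemma branch_root : branch A par root root = A := if_pos rfl

lemma IsArbor.branch_subset (h : IsArbor A par root) (hx : x ∈ A) :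
    branch A par root x ⊆ A := by
  unfold branch
  split_ifs
  · exact subset_rfl
  · exact Set.insert_subset (h.mapsTo hx) fun y hy => hy.1

lemma IsArbor.isBounded_branch (h : IsArbor A par root) (hx : x ∈ A) :
    Bornology.IsBounded (branch A par root x) :=
  A.finite_toSet.isBounded.subset (h.branch_subset hx)

lemma IsArbor.dist_par_le_diam_branch (h : IsArbor A par root) (hx : x ∈ A) (hxr : x ≠ root) :
    dist x (par x) ≤ Metric.diam (branch A par root x) := by
  refine Metric.dist_le_diam_of_mem (h.isBounded_branch hx) ?_ ?_ <;> rw [branch, if_neg hxr]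
  exacts [Set.mem_insert_of_mem _ ⟨hx, 0, rfl⟩, Set.mem_insert _ _]

lemma IsArbor.prod_diam_branch (h : IsArbor A par root) :
    ∏ x ∈ A, Metric.diam (branch A par root x) =
      Metric.diam (A : Set (E d)) * ∏ x ∈ A.erase root, Metric.diam (branch A par root x) := by
  rw [← Finset.mul_prod_erase A _ h.root_mem, branch_root]

lemma exists_isArbor (hne : A.Nonempty) : ∃ par root, IsArbor A par root := by
  obtain ⟨a, ha⟩ := hne
  exact ⟨fun _ => a, a, ha, rfl, fun _ _ => ha, fun _ _ => ⟨1, rfl⟩⟩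

lemma sweep_le (h : IsArbor A par root) :
    sweep A ≤ ∏ x ∈ A, Metric.diam (branch A par root x) := by
  refine csInf_le ⟨0, ?_⟩ ⟨par, root, h, rfl⟩
  rintro t ⟨par, root, -, rfl⟩
  exact Finset.prod_nonneg fun _ _ => Metric.diam_nonneg

lemma finite_spanTree_prods :
    {t : ℝ | ∃ T, IsSpanTree A T ∧ t = ∏ e ∈ T, edgeLen e}.Finite := by
  refine ((A.sym2.powerset : Set (Finset (Sym2 (E d)))).toFinite.image
    fun T => ∏ e ∈ T, edgeLen e).subset ?_
  rintro t ⟨T, hT, rfl⟩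
  refine ⟨T, Finset.mem_coe.2 (Finset.mem_powerset.2 fun e he => ?_), rfl⟩
  exact Finset.mem_sym2_iff.2 (hT.isConnectedOn.1 e he)

lemma spread_le (hT : IsSpanTree A T) : spread A ≤ ∏ e ∈ T, edgeLen e :=
  csInf_le finite_spanTree_prods.bddBelow ⟨T, hT, rfl⟩

lemma exists_isSpanTree_prod_eq_spread (hne : A.Nonempty) :
    ∃ T, IsSpanTree A T ∧ ∏ e ∈ T, edgeLen e = spread A := by
  obtain ⟨par, root, h⟩ := exists_isArbor hne
  have hprods : {t : ℝ | ∃ T, IsSpanTree A T ∧ t = ∏ e ∈ T, edgeLen e}.Nonempty :=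
    ⟨_, _, h.isSpanTree_arborEdges, rfl⟩
  obtain ⟨T, hT, hTeq⟩ := hprods.csInf_mem finite_spanTree_prods
  exact ⟨T, hT, hTeq.symm⟩

theorem diam_mul_spread_le_sweep (hne : A.Nonempty) :
    Metric.diam (A : Set (E d)) * spread A ≤ sweep A := by
  obtain ⟨par₀, root₀, h₀⟩ := exists_isArbor hne
  refine le_csInf ⟨_, par₀, root₀, h₀, rfl⟩ ?_
  rintro t ⟨par, root, h, rfl⟩
  rw [h.prod_diam_branch]
  refine mul_le_mul_of_nonneg_left ?_ Metric.diam_nonneg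
  calc spread A ≤ ∏ e ∈ arborEdges A par root, edgeLen e := spread_le h.isSpanTree_arborEdges
    _ = ∏ x ∈ A.erase root, dist x (par x) := h.prod_arborEdges
    _ ≤ _ := Finset.prod_le_prod (fun _ _ => dist_nonneg) fun x hx =>
        h.dist_par_le_diam_branch (Finset.mem_of_mem_erase hx) (Finset.ne_of_mem_erase hx)

lemma iterate_apply_eq_of_eqOn {α : Type*} {f g : α → α} {s : Set α} (hfg : Set.EqOn g f s)
    (hf : Set.MapsTo f s s) {x : α} (hx : x ∈ s) (n : ℕ) : g^[n] x = f^[n] x := by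
  induction n generalizing x with
  | zero => rfl
  | succ n ih =>
    rw [Function.iterate_succ_apply, Function.iterate_succ_apply, hfg hx, ih (hf hx)]

noncomputable def glue (A₂ : Finset (E d)) (par₁ par₂ : E d → E d) (r₁ r₂ : E d) :
    E d → E d :=
  fun x => if x ∈ A₂ then (if x = r₂ then r₁ else par₂ x) else par₁ x

section Glue

variable {A₁ A₂ : Finset (E d)} {par₁ par₂ : E d → E d} {r₁ r₂ : E d}
  (h₁ : IsArbor A₁ par₁ r₁) (h₂ : IsArbor A₂ par₂ r₂) (hA : Disjoint A₁ A₂)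

include hA in
lemma glue_of_mem₁ (hx : x ∈ A₁) : glue A₂ par₁ par₂ r₁ r₂ x = par₁ x := by
  rw [glue, if_neg (Finset.disjoint_left.1 hA hx)]

lemma glue_of_mem₂ (hx : x ∈ A₂) (hxr : x ≠ r₂) : glue A₂ par₁ par₂ r₁ r₂ x = par₂ x := by
  rw [glue, if_pos hx, if_neg hxr]

include h₂ in
lemma glue_root₂ : glue A₂ par₁ par₂ r₁ r₂ r₂ = r₁ := by
  rw [glue, if_pos h₂.root_mem, if_pos rfl]

include h₁ hA in
lemma iterate_glue_of_mem₁ (hx : x ∈ A₁) (n : ℕ) :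
    (glue A₂ par₁ par₂ r₁ r₂)^[n] x = par₁^[n] x :=
  iterate_apply_eq_of_eqOn (fun _ hy => glue_of_mem₁ hA hy) h₁.mapsTo hx n

include h₁ h₂ hA in
lemma iterate_glue_of_mem₂ (hy : y ∈ A₂) (n : ℕ) :
    (glue A₂ par₁ par₂ r₁ r₂)^[n] y = r₁ ∨
      ∃ m, (glue A₂ par₁ par₂ r₁ r₂)^[n] y = par₂^[m] y := by
  induction n generalizing y with
  | zero => exact Or.inr ⟨0, rfl⟩
  | succ n ih =>
    rw [Function.iterate_succ_apply]
    by_cases hyr : y = r₂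
    · left
      rw [hyr, glue_root₂ h₂, iterate_glue_of_mem₁ h₁ hA h₁.root_mem,
        Function.iterate_fixed h₁.par_root]
    · rw [glue_of_mem₂ hy hyr]
      exact (ih (h₂.mapsTo hy)).imp_right fun ⟨m, hm⟩ => ⟨m + 1, hm⟩

include h₂ in
lemma exists_iterate_glue_eq_root (hy : y ∈ A₂) :
    ∃ k, (glue A₂ par₁ par₂ r₁ r₂)^[k] y = r₁ := by
  obtain ⟨n, hn⟩ := h₂.exists_iterate_eq_root hy
  induction n generalizing y with
  | zero => exact ⟨1, by rw [Function.iterate_one, show y = r₂ from hn, glue_root₂ h₂]⟩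
  | succ n ih =>
    by_cases hyr : y = r₂
    · exact ⟨1, by rw [Function.iterate_one, hyr, glue_root₂ h₂]⟩
    · obtain ⟨k, hk⟩ := ih (h₂.mapsTo hy) hn
      exact ⟨k + 1, by rw [Function.iterate_succ_apply, glue_of_mem₂ hy hyr, hk]⟩

include h₁ h₂ hA in
lemma isArbor_glue : IsArbor (A₁ ∪ A₂) (glue A₂ par₁ par₂ r₁ r₂) r₁ := by
  refine ⟨Finset.mem_union_left _ h₁.root_mem, by rw [glue_of_mem₁ hA h₁.root_mem, h₁.par_root],
    fun x hx => ?_, fun x hx => ?_⟩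
  · rcases Finset.mem_union.1 hx with hx | hx
    · rw [glue_of_mem₁ hA hx]
      exact Finset.mem_union_left _ (h₁.mapsTo hx)
    · by_cases hxr : x = r₂
      · rw [hxr, glue_root₂ h₂]
        exact Finset.mem_union_left _ h₁.root_mem
      · rw [glue_of_mem₂ hx hxr]
        exact Finset.mem_union_right _ (h₂.mapsTo hx)
  · rcases Finset.mem_union.1 hx with hx | hx
    · obtain ⟨n, hn⟩ := h₁.exists_iterate_eq_root hx
      exact ⟨n, (iterate_glue_of_mem₁ h₁ hA hx n).trans hn⟩
    · exact exists_iterate_glue_eq_root h₂ hx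

include h₁ h₂ hA in
lemma branch_glue_subset₁ (hx : x ∈ A₁) (hxr : x ≠ r₁) :
    branch (A₁ ∪ A₂) (glue A₂ par₁ par₂ r₁ r₂) r₁ x ⊆ branch A₁ par₁ r₁ x := by
  rw [branch, branch, if_neg hxr, if_neg hxr, glue_of_mem₁ hA hx]
  refine Set.insert_subset_insert ?_
  rintro y ⟨hy, n, hn⟩
  rcases Finset.mem_union.1 hy with hy | hy
  · exact ⟨hy, n, (iterate_glue_of_mem₁ h₁ hA hy n).symm.trans hn⟩
  · rcases iterate_glue_of_mem₂ h₁ h₂ hA hy n with h | ⟨m, hm⟩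
    · exact absurd (hn.symm.trans h) hxr
    · exact absurd (hn ▸ hm ▸ h₂.mapsTo.iterate m hy) (Finset.disjoint_left.1 hA hx)

include h₁ h₂ hA in
lemma branch_glue_subset₂ (hx : x ∈ A₂) (hxr : x ≠ r₂) :
    branch (A₁ ∪ A₂) (glue A₂ par₁ par₂ r₁ r₂) r₁ x ⊆ branch A₂ par₂ r₂ x := by
  have hxr₁ : x ≠ r₁ := fun h => Finset.disjoint_left.1 hA h₁.root_mem (h ▸ hx)
  rw [branch, branch, if_neg hxr₁, if_neg hxr, glue_of_mem₂ hx hxr]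
  refine Set.insert_subset_insert ?_
  rintro y ⟨hy, n, hn⟩
  rcases Finset.mem_union.1 hy with hy | hy
  · have hmem := h₁.mapsTo.iterate n hy
    rw [← iterate_glue_of_mem₁ h₁ hA hy n, hn] at hmem
    exact absurd hx (Finset.disjoint_left.1 hA hmem)
  · rcases iterate_glue_of_mem₂ h₁ h₂ hA hy n with h | ⟨m, hm⟩
    · exact absurd (hn.symm.trans h) hxr₁
    · exact ⟨hy, m, hm.symm.trans hn⟩

include h₁ h₂ hA in
lemma prod_diam_branch_glue_le :
    ∏ x ∈ (A₁ ∪ A₂).erase r₁, Metric.diam (branch (A₁ ∪ A₂) (glue A₂ par₁ par₂ r₁ r₂) r₁ x) ≤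
      (∏ x ∈ A₁.erase r₁, Metric.diam (branch A₁ par₁ r₁ x)) *
        Metric.diam ((A₁ ∪ A₂ : Finset (E d)) : Set (E d)) *
          ∏ x ∈ A₂.erase r₂, Metric.diam (branch A₂ par₂ r₂ x) := by
  have h := isArbor_glue h₁ h₂ hA
  rw [Finset.erase_union_distrib, Finset.erase_eq_of_notMem (Finset.disjoint_left.1 hA h₁.root_mem),
    Finset.prod_union (hA.mono_left (Finset.erase_subset _ _)),
    ← Finset.mul_prod_erase A₂ _ h₂.root_mem, ← mul_assoc]
  have hprod_nonneg : ∀ s : Finset (E d), ∀ f : E d → Set (E d),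
      0 ≤ ∏ x ∈ s, Metric.diam (f x) := fun s f => Finset.prod_nonneg fun _ _ => Metric.diam_nonneg
  refine mul_le_mul (mul_le_mul ?_ ?_ Metric.diam_nonneg (hprod_nonneg _ _)) ?_
    (hprod_nonneg _ _) (mul_nonneg (hprod_nonneg _ _) Metric.diam_nonneg)
  · refine Finset.prod_le_prod (fun _ _ => Metric.diam_nonneg) fun x hx => ?_
    obtain ⟨hxr, hx⟩ := Finset.mem_erase.1 hx
    exact Metric.diam_mono (branch_glue_subset₁ h₁ h₂ hA hx hxr) (h₁.isBounded_branch hx)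
  · exact Metric.diam_mono (h.branch_subset (Finset.mem_union_right _ h₂.root_mem))
      (A₁ ∪ A₂).finite_toSet.isBounded
  · refine Finset.prod_le_prod (fun _ _ => Metric.diam_nonneg) fun x hx => ?_
    obtain ⟨hxr, hx⟩ := Finset.mem_erase.1 hx
    exact Metric.diam_mono (branch_glue_subset₂ h₁ h₂ hA hx hxr) (h₂.isBounded_branch hx)

end Glue

lemma pow_pred_mul_pow_pred_mul_le {a b : ℕ} (ha : 1 ≤ a) (hb : 1 ≤ b) :
    a ^ (a - 1) * b ^ (b - 1) * (a + b - 1) ≤ (a + b) ^ (a + b - 1) :=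
  calc a ^ (a - 1) * b ^ (b - 1) * (a + b - 1)
      ≤ (a + b) ^ (a - 1) * (a + b) ^ (b - 1) * (a + b) := by
        gcongr <;> omega
    _ = (a + b) ^ (a + b - 1) := by
        rw [← pow_add, ← pow_succ]
        congr 1
        omega

theorem IsSpanTree.exists_isArbor_prod_diam_branch_le (hT : IsSpanTree A T) :
    ∃ par root, IsArbor A par root ∧
      ∏ x ∈ A.erase root, Metric.diam (branch A par root x) ≤
        (A.card : ℝ) ^ (A.card - 1) * ∏ e ∈ T, edgeLen e := by
  induction hn : A.card using Nat.strong_induction_on generalizing A T with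
  | _ n ih =>
  rcases T.eq_empty_or_nonempty with rfl | hTne
  · obtain ⟨a, rfl⟩ := Finset.card_eq_one.1 (by simpa using hT.card_add_one.symm)
    obtain ⟨par, root, h⟩ := exists_isArbor (Finset.singleton_nonempty a)
    refine ⟨par, root, h, ?_⟩
    rw [Finset.mem_singleton.1 h.root_mem]
    simp [← hn]
  obtain ⟨e, he, hmax⟩ := T.exists_max_image edgeLen hTne
  induction e using Sym2.ind with | _ u v =>
  obtain ⟨A₁, A₂, T₁, T₂, hu, hv, hA, rfl, hTd, hTeq, hT₁, hT₂⟩ := hT.exists_split he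
  have hn' : A₁.card + A₂.card = n := hn ▸ (Finset.card_union_of_disjoint hA).symm
  have hpos₁ := Finset.card_pos.2 ⟨u, hu⟩
  have hpos₂ := Finset.card_pos.2 ⟨v, hv⟩
  obtain ⟨par₁, r₁, h₁, hP₁⟩ := ih _ (by omega) hT₁ rfl
  obtain ⟨par₂, r₂, h₂, hP₂⟩ := ih _ (by omega) hT₂ rfl
  refine ⟨glue A₂ par₁ par₂ r₁ r₂, r₁, isArbor_glue h₁ h₂ hA, ?_⟩
  -- the deleted edge is a longest one, so it controls the diameter of the whole set
  have hdiam := hT.diam_le_mul_of_forall_edgeLen_le hmax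
  rw [hn] at hdiam
  have hconst : (A₁.card : ℝ) ^ (A₁.card - 1) * (A₂.card : ℝ) ^ (A₂.card - 1) *
      ((n - 1 : ℕ) : ℝ) ≤ (n : ℝ) ^ (n - 1) := by
    rw [← hn']
    exact_mod_cast pow_pred_mul_pow_pred_mul_le hpos₁ hpos₂
  have := edgeLen_nonneg s(u, v)
  have := prod_edgeLen_nonneg T₁
  have := prod_edgeLen_nonneg T₂
  rw [← Finset.mul_prod_erase T _ he, ← hTeq, Finset.prod_union hTd]
  calc _ ≤ _ := prod_diam_branch_glue_le h₁ h₂ hA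
    _ ≤ ((A₁.card : ℝ) ^ (A₁.card - 1) * ∏ e ∈ T₁, edgeLen e) *
          (((n - 1 : ℕ) : ℝ) * edgeLen s(u, v)) *
            ((A₂.card : ℝ) ^ (A₂.card - 1) * ∏ e ∈ T₂, edgeLen e) := by
        gcongr
    _ = (A₁.card : ℝ) ^ (A₁.card - 1) * (A₂.card : ℝ) ^ (A₂.card - 1) * ((n - 1 : ℕ) : ℝ) *
          (edgeLen s(u, v) * ((∏ e ∈ T₁, edgeLen e) * ∏ e ∈ T₂, edgeLen e)) := by
        ring
    _ ≤ _ := by gcongr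

theorem sweep_le_pow_mul_diam_mul_spread (hne : A.Nonempty) :
    sweep A ≤ (A.card : ℝ) ^ (A.card - 1) * (Metric.diam (A : Set (E d)) * spread A) := by
  obtain ⟨T, hT, hspread⟩ := exists_isSpanTree_prod_eq_spread hne
  obtain ⟨par, root, h, hbound⟩ := hT.exists_isArbor_prod_diam_branch_le
  calc sweep A ≤ ∏ x ∈ A, Metric.diam (branch A par root x) := sweep_le h
    _ = Metric.diam (A : Set (E d)) * ∏ x ∈ A.erase root, Metric.diam (branch A par root x) :=
        h.prod_diam_branch
    _ ≤ Metric.diam (A : Set (E d)) * ((A.card : ℝ) ^ (A.card - 1) * spread A) := by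
        rw [← hspread]
        exact mul_le_mul_of_nonneg_left hbound Metric.diam_nonneg
    _ = _ := by ring

/-- For every finite `A ⊆ ℝ^d` with `|A| ≥ 2`,
`sweep(A) ≍_{|A|} diam(A) · spread(A)`, with constants depending only on `n = |A|`
(not on `A` or `d`). -/
theorem statement14 :
    ∀ n : ℕ, 2 ≤ n → ∃ c C : ℝ, 0 < c ∧ 0 < C ∧
      ∀ d : ℕ, ∀ A : Finset (E d), A.card = n →
        c * (Metric.diam (A : Set (E d)) * spread A) ≤ sweep A ∧
          sweep A ≤ C * (Metric.diam (A : Set (E d)) * spread A) := by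
  intro n hn
  refine ⟨1, (n : ℝ) ^ (n - 1), one_pos, by positivity, fun d A hA => ?_⟩
  have hne : A.Nonempty := Finset.card_pos.1 (by omega)
  refine ⟨(one_mul _).trans_le (diam_mul_spread_le_sweep hne), ?_⟩
  rw [← hA]
  exact sweep_le_pow_mul_diam_mul_spread hne

end LRP
end
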